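/- arXiv:math/0405329 — 5 statements merged into one kernel-verified Lean document; each statement's English description precedes it below -/
import Mathlib

section
/- If p and q are coprime positive integers with p/q = [a₁,…,a_h] (negative continued fraction with all a_i ≥ 2), then the reversed continued fraction [a_h,…,a₁] equals p/q' for some positive integer q' coprime with p. -/
/-- Negative continued fraction `[a₁,…,a_h] = a₁ - 1/(a₂ - 1/(⋯ - 1/a_h))`. -/
def ncf : List ℤ → ℚ
  | [] => 0
  | a :: l => (a : ℚ) - (ncf l)⁻¹

/-- The matrix product `∏ [[aᵢ, -1], [1, 0]]` recorded as `(P, Q, R, S)`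
    (columns `(P, Q)` and `(R, S)`). -/
def nm : List ℤ → ℤ × ℤ × ℤ × ℤ
  | [] => (1, 0, 0, 1)
  | a :: l => (a * (nm l).1 - (nm l).2.1, (nm l).1,
      a * (nm l).2.2.1 - (nm l).2.2.2, (nm l).2.2.1)

lemma nm_det : ∀ l : List ℤ,
    (nm l).1 * (nm l).2.2.2 - (nm l).2.1 * (nm l).2.2.1 = 1 := by
  intro l
  induction l with
  | nil => simp [nm]
  | cons a l ih => simp only [nm]; ring_nf; ring_nf at ih; linarith

lemma nm_pos : ∀ l : List ℤ, (∀ a ∈ l, 2 ≤ a) →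
    (nm l).2.1 < (nm l).1 ∧ 0 ≤ (nm l).2.1 := by
  intro l
  induction l with
  | nil => intro _; simp [nm]
  | cons a l ih =>
    intro h
    have ha : 2 ≤ a := h a (by simp)
    have ih' := ih (fun b hb => h b (by simp [hb]))
    simp only [nm]
    constructor
    · nlinarith [ih'.1, ih'.2]
    · linarith [ih'.1, ih'.2]

lemma nm_neg : ∀ l : List ℤ, l ≠ [] → (∀ a ∈ l, 2 ≤ a) →
    (nm l).2.2.1 < (nm l).2.2.2 ∧ (nm l).2.2.2 ≤ 0 := by
  intro l
  induction l with
  | nil => intro h; exact absurd rfl h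
  | cons a l ih =>
    intro _ h
    have ha : 2 ≤ a := h a (by simp)
    by_cases hl : l = []
    · subst hl; simp [nm]
    · have ih' := ih hl (fun b hb => h b (by simp [hb]))
      simp only [nm]
      constructor
      · nlinarith [ih'.1, ih'.2]
      · linarith [ih'.1, ih'.2]

lemma nm_append (l : List ℤ) (a : ℤ) :
    nm (l ++ [a]) = (a * (nm l).1 + (nm l).2.2.1, a * (nm l).2.1 + (nm l).2.2.2,
      -(nm l).1, -(nm l).2.1) := by
  induction l with
  | nil => simp [nm]
  | cons b l ih =>
    simp only [List.cons_append, nm, List.append_eq, ih, Prod.mk.injEq]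
    refine ⟨by ring, trivial, by ring, trivial⟩

lemma nm_reverse : ∀ l : List ℤ,
    (nm l.reverse).1 = (nm l).1 ∧ (nm l.reverse).2.1 = -(nm l).2.2.1 ∧
    (nm l.reverse).2.2.1 = -(nm l).2.1 ∧ (nm l.reverse).2.2.2 = (nm l).2.2.2 := by
  intro l
  induction l with
  | nil => simp [nm]
  | cons a l ih =>
    obtain ⟨h1, h2, h3, h4⟩ := ih
    simp only [List.reverse_cons, nm_append, nm, h1, h2, h3, h4]
    refine ⟨by ring, by ring, trivial, by ring⟩

lemma ncf_eq : ∀ l : List ℤ, l ≠ [] → (∀ a ∈ l, 2 ≤ a) →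
    ncf l = ((nm l).1 : ℚ) / ((nm l).2.1 : ℚ) := by
  intro l
  induction l with
  | nil => intro h; exact absurd rfl h
  | cons a l ih =>
    intro _ h
    by_cases hl : l = []
    · subst hl; simp [ncf, nm]
    · have ih' := ih hl (fun b hb => h b (by simp [hb]))
      have hpos := nm_pos l (fun b hb => h b (by simp [hb]))
      have hP : (0 : ℤ) < (nm l).1 := lt_of_le_of_lt hpos.2 hpos.1
      have hPQ : ((nm l).1 : ℚ) ≠ 0 := by exact_mod_cast hP.ne'
      simp only [ncf, ih', nm, inv_div]
      push_cast
      field_simp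

/-- If `p/q = [a₁,…,a_h]` with `p, q` coprime positive integers and all `aᵢ ≥ 2`,
    then the reversed continued fraction `[a_h,…,a₁]` equals `p/q'` for some
    positive integer `q'` coprime with `p`. -/
theorem stmt_1 (l : List ℤ) (hl : l ≠ []) (h2 : ∀ a ∈ l, 2 ≤ a)
    (p q : ℤ) (hp : 0 < p) (hq : 0 < q) (hcop : Int.gcd p q = 1)
    (hpq : (p : ℚ) / (q : ℚ) = ncf l) :
    ∃ q' : ℤ, 0 < q' ∧ Int.gcd p q' = 1 ∧ ncf l.reverse = (p : ℚ) / (q' : ℚ) := by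
  set P := (nm l).1 with hPdef
  set Q := (nm l).2.1 with hQdef
  set R := (nm l).2.2.1 with hRdef
  set S := (nm l).2.2.2 with hSdef
  have hdet : P * S - Q * R = 1 := nm_det l
  have hpos := nm_pos l h2
  have hQ0 : 0 < Q := by
    obtain ⟨a, t, rfl⟩ := List.exists_cons_of_ne_nil hl
    have := nm_pos t (fun b hb => h2 b (by simp [hb]))
    simpa only [hQdef, nm] using lt_of_le_of_lt this.2 this.1
  have hP0 : 0 < P := lt_of_le_of_lt hpos.2 hpos.1
  -- coprimality of P and Q
  have hcopPQ : IsCoprime P Q := ⟨S, -R, by linarith [hdet]⟩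
  -- p = P and q = Q
  have hcross : p * Q = P * q := by
    have h1 : ncf l = (P : ℚ) / (Q : ℚ) := ncf_eq l hl h2
    rw [h1] at hpq
    have hq' : (q : ℚ) ≠ 0 := by exact_mod_cast hq.ne'
    have hQ' : (Q : ℚ) ≠ 0 := by exact_mod_cast hQ0.ne'
    have := (div_eq_div_iff hq' hQ').mp hpq
    exact_mod_cast this
  have hcopp : IsCoprime p q := Int.isCoprime_iff_gcd_eq_one.mpr hcop
  have hpP : p = P := by
    have h1 : p ∣ P * q := ⟨Q, by linarith [hcross]⟩
    have h2' : P ∣ p * Q := ⟨q, by linarith [hcross]⟩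
    have d1 : p ∣ P := (IsCoprime.dvd_of_dvd_mul_right hcopp h1)
    have d2 : P ∣ p := (IsCoprime.dvd_of_dvd_mul_right hcopPQ h2')
    exact Int.dvd_antisymm hp.le hP0.le d1 d2
  -- the reversed fraction
  have hlrev : l.reverse ≠ [] := by simpa using hl
  have h2rev : ∀ a ∈ l.reverse, 2 ≤ a := fun a ha => h2 a (List.mem_reverse.mp ha)
  obtain ⟨r1, r2, r3, r4⟩ := nm_reverse l
  have hneg := nm_neg l hl h2
  have hR0 : 0 < -R := by linarith [hneg.1, hneg.2]
  refine ⟨-R, hR0, ?_, ?_⟩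
  · rw [hpP]
    exact Int.isCoprime_iff_gcd_eq_one.mp ⟨S, Q, by linarith [hdet]⟩
  · rw [ncf_eq l.reverse hlrev h2rev, r1, r2, hpP]
end

section
/- Let ρ = [a₁,…,a_h] and σ = [b₁,…,b_k] be negative continued fraction expansions with all entries ≥ 2. Then ρ ≤ σ if and only if (a₁,…,a_h) ≼ (b₁,…,b_k), where ≼ is the order defined by: (a₁,…,a_h) ≼ (b₁,…,b_k) iff there is an index 1 ≤ j ≤ min(h,k) with a_i = b_i for i < j and either a_j < b_j, or j = k ≤ h and a_k = b_k. -/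
/-- The order `≼` on finite integer sequences: `(a₁,…,a_h) ≼ (b₁,…,b_k)` iff there is
    an index `1 ≤ j ≤ min(h,k)` (here `j` is zero-based, so `j < min h k`) with
    `aᵢ = bᵢ` for `i < j` and either `a_j < b_j`, or `j` is the last index of `b`
    (`j = k ≤ h` in one-based terms) and `a_j = b_j`. -/
def SeqLE (l₁ l₂ : List ℤ) : Prop :=
  ∃ j : ℕ, j < min l₁.length l₂.length ∧ l₁.take j = l₂.take j ∧
    (l₁.getD j 0 < l₂.getD j 0 ∨
      (j + 1 = l₂.length ∧ l₂.length ≤ l₁.length ∧ l₁.getD j 0 = l₂.getD j 0))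

/-! Entries `≥ 2` force every nonempty `[a₁,…,a_h]` above `1`, so `ρ = a₁ - x` with
`x = 1/[a₂,…,a_h] ∈ [0,1)` (and `x = 0` for an empty tail). Hence `ρ ≤ σ` is decided by
`a₁ < b₁`, or, when `a₁ = b₁`, by `1/[b₂,…] ≤ 1/[a₂,…]`, i.e. by comparing the tails again;
this is exactly the recursion of `≼`. -/

lemma one_lt_ncf : ∀ l : List ℤ, l ≠ [] → (∀ a ∈ l, 2 ≤ a) → 1 < ncf l
  | a :: t, _, h => by
    have ha : (2 : ℚ) ≤ a := by exact_mod_cast h a List.mem_cons_self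
    have ht : ∀ x ∈ t, 2 ≤ x := fun x hx => h x (List.mem_cons_of_mem _ hx)
    have hinv : (ncf t)⁻¹ < 1 := by
      rcases eq_or_ne t [] with rfl | hne
      · simp [ncf]
      · exact inv_lt_one_of_one_lt₀ (one_lt_ncf t hne ht)
    simp only [ncf]
    linarith

lemma ncf_pos {l : List ℤ} (hl : l ≠ []) (h : ∀ a ∈ l, 2 ≤ a) : 0 < ncf l :=
  zero_lt_one.trans (one_lt_ncf l hl h)

lemma inv_ncf_nonneg (l : List ℤ) (h : ∀ a ∈ l, 2 ≤ a) : 0 ≤ (ncf l)⁻¹ := by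
  rcases eq_or_ne l [] with rfl | hl
  · simp [ncf]
  · exact inv_nonneg.mpr (ncf_pos hl h).le

lemma inv_ncf_lt_one (l : List ℤ) (h : ∀ a ∈ l, 2 ≤ a) : (ncf l)⁻¹ < 1 := by
  rcases eq_or_ne l [] with rfl | hl
  · simp [ncf]
  · exact inv_lt_one_of_one_lt₀ (one_lt_ncf l hl h)

lemma intCast_sub_le_intCast_sub_iff {R : Type*} [Field R] [LinearOrder R]
    [IsStrictOrderedRing R] {a b : ℤ} {x y : R} (hx₀ : 0 ≤ x) (hx₁ : x < 1)
    (hy₀ : 0 ≤ y) (hy₁ : y < 1) :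
    (a : R) - x ≤ b - y ↔ a < b ∨ (a = b ∧ y ≤ x) := by
  rcases lt_trichotomy a b with hab | rfl | hab
  · have : (a : R) + 1 ≤ b := by exact_mod_cast hab
    simp only [hab, true_or, iff_true]
    linarith
  · simp only [lt_irrefl, false_or, true_and, sub_le_sub_iff_left]
  · have : (b : R) + 1 ≤ a := by exact_mod_cast hab
    simp only [hab.not_gt, hab.ne', false_and, or_self, iff_false, not_le]
    linarith

lemma ncf_cons_le_ncf_cons_iff {a b : ℤ} {t₁ t₂ : List ℤ} (h₁ : ∀ x ∈ t₁, 2 ≤ x)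
    (h₂ : ∀ x ∈ t₂, 2 ≤ x) :
    ncf (a :: t₁) ≤ ncf (b :: t₂) ↔ a < b ∨ (a = b ∧ (ncf t₂)⁻¹ ≤ (ncf t₁)⁻¹) :=
  intCast_sub_le_intCast_sub_iff (inv_ncf_nonneg t₁ h₁) (inv_ncf_lt_one t₁ h₁)
    (inv_ncf_nonneg t₂ h₂) (inv_ncf_lt_one t₂ h₂)

lemma not_seqLE_nil_left (l : List ℤ) : ¬ SeqLE [] l := by
  rintro ⟨j, hj, -⟩
  simp at hj

lemma not_seqLE_nil_right (l : List ℤ) : ¬ SeqLE l [] := by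
  rintro ⟨j, hj, -⟩
  simp at hj

lemma seqLE_cons_cons_iff (a b : ℤ) (t₁ t₂ : List ℤ) :
    SeqLE (a :: t₁) (b :: t₂) ↔ a < b ∨ (a = b ∧ (t₂ = [] ∨ SeqLE t₁ t₂)) := by
  constructor
  · rintro ⟨_ | j, hj, htake, hcond⟩
    · simp only [List.getD_cons_zero, List.length_cons] at hcond
      rcases hcond with hlt | ⟨hlen, -, rfl⟩
      · exact Or.inl hlt
      · exact Or.inr ⟨rfl, Or.inl (List.length_eq_zero_iff.mp (by omega))⟩
    · simp only [List.take_succ_cons, List.cons.injEq] at htake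
      simp only [List.length_cons, Nat.add_min_add_right, Nat.add_lt_add_iff_right] at hj
      simp only [List.getD_cons_succ, List.length_cons, Nat.add_right_cancel_iff,
        Nat.add_le_add_iff_right] at hcond
      exact Or.inr ⟨htake.1, Or.inr ⟨j, hj, htake.2, hcond⟩⟩
  · rintro (hab | ⟨rfl, rfl | ⟨j, hj, htake, hcond⟩⟩)
    · exact ⟨0, by simp, rfl, Or.inl hab⟩
    · exact ⟨0, by simp, rfl, Or.inr ⟨rfl, by simp, rfl⟩⟩
    · refine ⟨j + 1, by simpa using hj, by simpa using htake, ?_⟩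
      simpa only [List.getD_cons_succ, List.length_cons, Nat.add_right_cancel_iff,
        Nat.add_le_add_iff_right] using hcond

theorem stmt_2_general (l₁ l₂ : List ℤ) (h₁ : l₁ ≠ [])
    (ha : ∀ a ∈ l₁, 2 ≤ a) (hb : ∀ b ∈ l₂, 2 ≤ b) :
    ncf l₁ ≤ ncf l₂ ↔ SeqLE l₁ l₂ := by
  induction l₁ generalizing l₂ with
  | nil => exact absurd rfl h₁
  | cons a t₁ ih =>
    have ht₁ : ∀ x ∈ t₁, 2 ≤ x := fun x hx => ha x (List.mem_cons_of_mem _ hx)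
    cases l₂ with
    | nil =>
      rw [iff_false_intro (not_seqLE_nil_right _), iff_false, not_le]
      exact ncf_pos h₁ ha
    | cons b t₂ =>
      have ht₂ : ∀ x ∈ t₂, 2 ≤ x := fun x hx => hb x (List.mem_cons_of_mem _ hx)
      suffices hinv : (ncf t₂)⁻¹ ≤ (ncf t₁)⁻¹ ↔ t₂ = [] ∨ SeqLE t₁ t₂ by
        rw [ncf_cons_le_ncf_cons_iff ht₁ ht₂, seqLE_cons_cons_iff, hinv]
      rcases eq_or_ne t₂ [] with rfl | ht₂ne
      · simpa [ncf] using inv_ncf_nonneg t₁ ht₁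
      have hpos₂ : 0 < ncf t₂ := ncf_pos ht₂ne ht₂
      rcases eq_or_ne t₁ [] with rfl | ht₁ne
      · simpa [ncf, ht₂ne, not_seqLE_nil_left] using hpos₂
      have hpos₁ : 0 < ncf t₁ := ncf_pos ht₁ne ht₁
      rw [inv_le_inv₀ hpos₂ hpos₁, ih t₂ ht₁ne ht₁ ht₂]
      simp [ht₂ne]

/-- For negative continued fractions with all entries `≥ 2`,
    `ρ ≤ σ` iff `(a₁,…,a_h) ≼ (b₁,…,b_k)`. -/
theorem stmt_2 (l₁ l₂ : List ℤ) (h₁ : l₁ ≠ []) (h₂ : l₂ ≠ [])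
    (ha : ∀ a ∈ l₁, 2 ≤ a) (hb : ∀ b ∈ l₂, 2 ≤ b) :
    ncf l₁ ≤ ncf l₂ ↔ SeqLE l₁ l₂ :=
  stmt_2_general l₁ l₂ h₁ ha hb
end

section
/- For integers m_k, m_{k-1}, …, m₁ with m₁, m₃, …, m_{k-1} ≥ 3 (odd indices) and m₂, m₄, …, m_k ≥ 0 (even indices), k even, the following identity of rationals holds: the positive continued fraction [m_k+2, m_{k-1}-2, m_{k-2}+1, …, m₃-2, m₂+1, m₁-1]⁺ equals the negative continued fraction [m_k+3, 2,…,2 (m_{k-1}-3 twos), m_{k-2}+3, …, 2,…,2 (m₃-3 twos), m₂+3, 2,…,2 (m₁-2 twos)]. -/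
/-- Positive continued fraction `[n₁,…,n_k]⁺ = n₁ + 1/(n₂ + 1/(⋯ + 1/n_k))`. -/
def pcf : List ℤ → ℚ
  | [] => 0
  | a :: l => (a : ℚ) + (pcf l)⁻¹

/-- The list `[m_k+2, m_{k-1}-2, m_{k-2}+1, …, m₃-2, m₂+1, m₁-1]`
    (indices descending from `k`, `k` even): the top (index `k`) entry is `m_k+2`,
    other even-index entries are `m_j+1`, odd-index entries are `m_j-2`, except
    the bottom (index `1`) entry which is `m₁-1`. -/
def plist7 (m : ℕ → ℤ) (k : ℕ) : List ℤ :=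
  (List.range k).reverse.map (fun i =>
    let j := i + 1
    if j = k then m j + 2
    else if j = 1 then m j - 1
    else if j % 2 = 1 then m j - 2
    else m j + 1)

/-- The list `[m_k+3, 2,…,2 (m_{k-1}-3 twos), m_{k-2}+3, …, 2,…,2 (m₃-3 twos),
    m₂+3, 2,…,2 (m₁-2 twos)]` for even `k`. -/
def nlist7 (m : ℕ → ℤ) : ℕ → List ℤ
  | 0 => []
  | 1 => []
  | 2 => (m 2 + 3) :: List.replicate (m 1 - 2).toNat 2
  | 3 => []
  | (k + 4) => ((m (k + 4) + 3) :: List.replicate (m (k + 3) - 3).toNat 2)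
      ++ nlist7 m (k + 2)

lemma ncf_twos (n : ℕ) : ncf (List.replicate n 2) = (n+1)/n := by
  induction n with
  | zero => simp [ncf]
  | succ n ih =>
    rw [List.replicate_succ, ncf, ih, inv_div]
    have h : ((n:ℚ)+1) ≠ 0 := by positivity
    push_cast
    field_simp
    ring

lemma ncf_twos_append (n : ℕ) (l : List ℤ) (h : 1 < ncf l) :
    ncf (List.replicate n 2 ++ l) = ((n+1) * ncf l - n) / (n * ncf l - n + 1) := by
  induction n with
  | zero => simp
  | succ n ih =>
    rw [List.replicate_succ, List.cons_append, ncf, ih]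
    set v := ncf l
    have h1 : (0:ℚ) < v - 1 := by linarith
    have h2 : (0:ℚ) < ((n:ℚ)+1) * v - n := by nlinarith [n.cast_nonneg (α := ℚ)]
    rw [inv_div]
    push_cast
    have hden : ((n:ℚ)+1)*v - ((n:ℚ)+1) + 1 = ((n:ℚ)+1)*v - (n:ℚ) := by ring
    rw [hden, sub_eq_iff_eq_add, ← add_div, eq_div_iff h2.ne']
    ring

lemma ncf_twos_append_gt (n : ℕ) (l : List ℤ) (h : 1 < ncf l) :
    1 < ncf (List.replicate n 2 ++ l) := by
  rw [ncf_twos_append n l h]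
  set v := ncf l
  have h3 : (0:ℚ) < (n:ℚ) * v - n + 1 := by nlinarith [n.cast_nonneg (α := ℚ)]
  rw [lt_div_iff₀ h3]
  nlinarith [n.cast_nonneg (α := ℚ)]

def gaux (m : ℕ → ℤ) (i : ℕ) : ℤ :=
  if i + 1 = 1 then m (i+1) - 1 else if (i+1) % 2 = 1 then m (i+1) - 2 else m (i+1) + 1

def ptail (m : ℕ → ℤ) (k : ℕ) : List ℤ := (List.range k).reverse.map (gaux m)

lemma ptail_succ (m : ℕ → ℤ) (k : ℕ) : ptail m (k+1) = gaux m k :: ptail m k := by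
  simp [ptail, List.range_succ]

lemma plist7_eq (m : ℕ → ℤ) (k : ℕ) (hk : 1 ≤ k) :
    plist7 m k = (m k + 2) :: ptail m (k-1) := by
  obtain ⟨k, rfl⟩ : ∃ n, k = n + 1 := ⟨k - 1, by omega⟩
  simp only [plist7, List.range_succ, List.reverse_append, List.reverse_singleton,
    List.map_cons, List.singleton_append, Nat.add_sub_cancel]
  rw [if_pos trivial]
  congr 1
  apply List.map_congr_left
  intro i hi
  simp only [List.mem_reverse, List.mem_range] at hi
  simp only [gaux]
  rw [if_neg (by omega)]

lemma nlist7_eq (m : ℕ → ℤ) (k : ℕ) :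
    nlist7 m (k+4) = ((m (k + 4) + 3) :: List.replicate (m (k + 3) - 3).toNat 2)
      ++ nlist7 m (k + 2) := rfl

lemma aux7 (n : ℕ) : ∀ m : ℕ → ℤ,
    (∀ j, 1 ≤ j → j ≤ 2*n+2 → Odd j → 3 ≤ m j) →
    (∀ j, 1 ≤ j → j ≤ 2*n+2 → Even j → 0 ≤ m j) →
    pcf (plist7 m (2*n+2)) = ncf (nlist7 m (2*n+2)) ∧ 1 < ncf (nlist7 m (2*n+2)) := by
  induction n with
  | zero =>
    intro m hodd heven
    have h1 : 3 ≤ m 1 := hodd 1 le_rfl (by omega) ⟨0, by ring⟩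
    have h2 : 0 ≤ m 2 := heven 2 (by omega) (by omega) ⟨1, by ring⟩
    have ha : (3:ℚ) ≤ (m 1 : ℚ) := by exact_mod_cast h1
    have hb : (0:ℚ) ≤ (m 2 : ℚ) := by exact_mod_cast h2
    have hplist : plist7 m 2 = [m 2 + 2, m 1 - 1] := by
      rw [plist7_eq m 2 (by omega)]
      norm_num [ptail, List.range_succ, gaux]
    have hcast : (((m 1 - 2).toNat : ℚ)) = (m 1 : ℚ) - 2 := by
      have := Int.toNat_of_nonneg (a := m 1 - 2) (by omega)
      exact_mod_cast congrArg (fun z : ℤ => (z : ℚ)) this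
    have hn : nlist7 m 2 = (m 2 + 3) :: List.replicate (m 1 - 2).toNat 2 := rfl
    have hd : (0:ℚ) < (m 1 : ℚ) - 1 := by linarith
    have hncf : ncf (nlist7 m 2) =
        (m 2 : ℚ) + 3 - ((m 1 : ℚ) - 2) / ((m 1 : ℚ) - 1) := by
      rw [hn, ncf, ncf_twos, inv_div, hcast,
        show ((m 1:ℚ)-2)+1 = (m 1:ℚ)-1 from by ring]
      push_cast
      ring
    have hfrac : ((m 1 : ℚ) - 2) / ((m 1 : ℚ) - 1) = 1 - ((m 1 : ℚ) - 1)⁻¹ := by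
      have h : ((m 1:ℚ)) - 2 = ((m 1:ℚ) - 1) - 1 := by ring
      rw [h, sub_div, div_self hd.ne', one_div]
    constructor
    · rw [hplist, hncf]
      simp only [pcf]
      push_cast
      rw [inv_zero, add_zero, hfrac]
      ring
    · rw [hncf, hfrac]
      have : ((m 1 : ℚ) - 1)⁻¹ > 0 := by positivity
      linarith
  | succ n ih =>
    intro m hodd heven
    obtain ⟨hpv, hv⟩ := ih m
      (fun j h1 h2 h3 => hodd j h1 (by omega) h3)
      (fun j h1 h2 h3 => heven j h1 (by omega) h3)
    have hk4 : 2*(n+1)+2 = (2*n)+4 := by ring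
    have hcZ : 3 ≤ m (2*n+3) := hodd (2*n+3) (by omega) (by omega) ⟨n+1, by ring⟩
    have hdZ : 0 ≤ m (2*n+4) := heven (2*n+4) (by omega) (by omega) ⟨n+2, by ring⟩
    have hc : (3:ℚ) ≤ (m (2*n+3) : ℚ) := by exact_mod_cast hcZ
    have hd : (0:ℚ) ≤ (m (2*n+4) : ℚ) := by exact_mod_cast hdZ
    have hcast : (((m (2*n+3) - 3).toNat : ℚ)) = (m (2*n+3) : ℚ) - 3 := by
      have := Int.toNat_of_nonneg (a := m (2*n+3) - 3) (by omega)
      exact_mod_cast congrArg (fun z : ℤ => (z : ℚ)) this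
    have hWgt : 1 < ncf (List.replicate (m (2*n+3) - 3).toNat 2 ++ nlist7 m (2*n+2)) :=
      ncf_twos_append_gt _ _ hv
    have hncf : ncf (nlist7 m ((2*n)+4)) =
        (m (2*n+4) : ℚ) + 3
          - (ncf (List.replicate (m (2*n+3) - 3).toNat 2 ++ nlist7 m (2*n+2)))⁻¹ := by
      rw [nlist7_eq, List.cons_append, ncf]
      push_cast
      ring
    have hv1 : (0:ℚ) < ncf (nlist7 m (2*n+2)) - 1 := by linarith
    rw [hk4]
    constructor
    · rw [hncf, ncf_twos_append _ _ hv, hcast]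
      rw [plist7_eq m ((2*n)+4) (by omega)]
      have hsub : (2*n)+4 - 1 = (2*n+2)+1 := by omega
      rw [hsub, ptail_succ]
      have hps : ptail m (2*n+2) = gaux m (2*n+1) :: ptail m (2*n+1) := by
        have h := ptail_succ m (2*n+1)
        rwa [show 2*n+1+1 = 2*n+2 from by omega] at h
      rw [hps]
      have hg1 : gaux m (2*n+2) = m (2*n+3) - 2 := by
        simp only [gaux]
        rw [if_neg (by omega), if_pos (by omega)]
      have hg2 : gaux m (2*n+1) = m (2*n+2) + 1 := by
        simp only [gaux]
        rw [if_neg (by omega), if_neg (by omega)]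
      rw [hg1, hg2]
      simp only [pcf]
      have hpv' : pcf (plist7 m (2*n+2))
          = (m (2*n+2) : ℚ) + 2 + (pcf (ptail m (2*n+1)))⁻¹ := by
        rw [plist7_eq m (2*n+2) (by omega)]
        have hps2 : 2*n+2-1 = 2*n+1 := by omega
        rw [hps2, pcf]
        push_cast
        ring
      have hcast2 : ((m (2*n+2) + 1 : ℤ) : ℚ) + (pcf (ptail m (2*n+1)))⁻¹
          = ncf (nlist7 m (2*n+2)) - 1 := by
        rw [hpv'] at hpv
        push_cast
        linarith
      rw [hcast2]
      have hB' : (0:ℚ) < ((m (2*n+3) : ℚ)-2) * ncf (nlist7 m (2*n+2)) - (m (2*n+3) : ℚ) + 3 := by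
        nlinarith
      have e1 : ((m (2*n+3) - 2 : ℤ) : ℚ) + (ncf (nlist7 m (2*n+2)) - 1)⁻¹
          = (((m (2*n+3) : ℚ)-2) * ncf (nlist7 m (2*n+2)) - (m (2*n+3) : ℚ) + 3)
            / (ncf (nlist7 m (2*n+2)) - 1) := by
        rw [eq_div_iff hv1.ne', add_mul, inv_mul_cancel₀ hv1.ne']
        push_cast
        ring
      rw [e1, inv_div, inv_div]
      have hD2 : ((m (2*n+3) : ℚ) - 3 + 1) * ncf (nlist7 m (2*n+2)) - ((m (2*n+3) : ℚ) - 3)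
          = ((m (2*n+3) : ℚ)-2) * ncf (nlist7 m (2*n+2)) - (m (2*n+3) : ℚ) + 3 := by
        ring
      rw [hD2, eq_sub_iff_add_eq, add_assoc, ← add_div]
      have hsum : ncf (nlist7 m (2*n+2)) - 1
          + (((m (2*n+3) : ℚ) - 3) * ncf (nlist7 m (2*n+2)) - ((m (2*n+3) : ℚ) - 3) + 1)
          = ((m (2*n+3) : ℚ)-2) * ncf (nlist7 m (2*n+2)) - (m (2*n+3) : ℚ) + 3 := by
        ring
      rw [hsum, div_self hB'.ne']
      push_cast
      ring
    · rw [hncf]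
      have h0 : (0:ℚ) < (ncf (List.replicate (m (2*n+3) - 3).toNat 2 ++ nlist7 m (2*n+2)))⁻¹ := by
        positivity
      have h1 : (ncf (List.replicate (m (2*n+3) - 3).toNat 2 ++ nlist7 m (2*n+2)))⁻¹ < 1 := by
        rw [inv_lt_one_iff₀]; right; exact hWgt
      linarith


/-- For `k` even, `m₁, m₃, …, m_{k-1} ≥ 3` and `m₂, m₄, …, m_k ≥ 0`:
    `[m_k+2, m_{k-1}-2, m_{k-2}+1, …, m₃-2, m₂+1, m₁-1]⁺ =
     [m_k+3, 2,…,2 (m_{k-1}-3 twos), m_{k-2}+3, …, m₂+3, 2,…,2 (m₁-2 twos)]`. -/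
theorem stmt_7 (m : ℕ → ℤ) (k : ℕ) (hk : Even k) (hk2 : 2 ≤ k)
    (hodd : ∀ j, 1 ≤ j → j ≤ k → Odd j → 3 ≤ m j)
    (heven : ∀ j, 1 ≤ j → j ≤ k → Even j → 0 ≤ m j) :
    pcf (plist7 m k) = ncf (nlist7 m k) := by
  obtain ⟨j, rfl⟩ := hk
  obtain ⟨n, rfl⟩ : ∃ n, j = n + 1 := ⟨j-1, by omega⟩
  rw [show n+1+(n+1) = 2*n+2 from by omega]
  exact (aux7 n m (fun i h1 h2 h3 => hodd i h1 (by omega) h3)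
    (fun i h1 h2 h3 => heven i h1 (by omega) h3)).1
end

section
/- If δ₂ = [m₁, 2,…,2 (m₂ twos), m₃, …, m_{2q-1}, 2,…,2 (m_{2q} twos)] is a rational > 2 with m₁, m₃, …, m_{2q-1} ≥ 3 and m₂, m₄, …, m_{2q} ≥ 0, then δ₂' = δ₂/(δ₂-1) has negative continued fraction expansion [2,…,2 (m₁-2 twos), m₂+3, 2,…,2 (m₃-3 twos), m₄+3, …, 2,…,2 (m_{2q-1}-3 twos), m_{2q}+2]. -/
def primal10 : (ℕ → ℤ) → ℕ → List ℤ
  | _, 0 => []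
  | m, (q + 1) =>
      (m 1 :: List.replicate (m 2).toNat 2) ++ primal10 (fun j => m (j + 2)) q

def dual10 : (ℕ → ℤ) → ℤ → ℕ → List ℤ
  | _, _, 0 => []
  | m, c, 1 => List.replicate (m 1 - c).toNat 2 ++ [m 2 + 2]
  | m, c, (q + 2) =>
      List.replicate (m 1 - c).toNat 2 ++
        ((m 2 + 3) :: dual10 (fun j => m (j + 2)) 3 (q + 1))

def fq (x : ℚ) : ℚ := 2 - x⁻¹
def Dq (x : ℚ) : ℚ := x / (x - 1)

lemma ncf_nil : ncf [] = 0 := rfl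
lemma ncf_cons (a : ℤ) (l : List ℤ) : ncf (a :: l) = (a : ℚ) - (ncf l)⁻¹ := rfl

lemma ncf_rep (k : ℕ) (l : List ℤ) :
    ncf (List.replicate k 2 ++ l) = fq^[k] (ncf l) := by
  induction k with
  | zero => simp
  | succ n ih =>
      rw [List.replicate_succ, List.cons_append, ncf_cons, ih,
        Function.iterate_succ_apply']
      simp [fq]

lemma fq_gt_one {x : ℚ} (hx : 1 < x) : 1 < fq x := by
  have h0 : 0 < x := lt_trans one_pos hx
  have hinv : x * x⁻¹ = 1 := mul_inv_cancel₀ h0.ne'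
  have h2 : 0 < x⁻¹ := inv_pos.mpr h0
  unfold fq
  nlinarith

lemma iter_fq_gt_one {x : ℚ} (hx : 1 < x) (k : ℕ) : 1 < fq^[k] x := by
  induction k with
  | zero => simpa
  | succ n ih => rw [Function.iterate_succ_apply']; exact fq_gt_one ih

lemma Dq_fq {x : ℚ} (hx : 1 < x) : Dq (fq x) = Dq x + 1 := by
  have h0 : x ≠ 0 := (lt_trans one_pos hx).ne'
  have h1 : x - 1 ≠ 0 := sub_ne_zero.mpr (ne_of_gt hx)
  have h2 : fq x - 1 ≠ 0 := sub_ne_zero.mpr (ne_of_gt (fq_gt_one hx))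
  have h1' : (-1 : ℚ) + x ≠ 0 := fun h => h1 (by linarith)
  unfold Dq fq at *
  field_simp
  ring_nf
  field_simp
  ring

lemma Dq_iter {x : ℚ} (hx : 1 < x) (k : ℕ) : Dq (fq^[k] x) = Dq x + k := by
  induction k with
  | zero => simp
  | succ n ih =>
      rw [Function.iterate_succ_apply', Dq_fq (iter_fq_gt_one hx n), ih]
      push_cast; ring

lemma Dq_add_one {z : ℚ} (hz : z ≠ 0) : Dq (z + 1) = fq (Dq z) := by
  unfold Dq fq
  rw [inv_div]
  have h1 : z + 1 - 1 = z := by ring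
  rw [h1]
  field_simp
  ring

lemma Dq_add_nat {x : ℚ} (hx : 1 < x) (k : ℕ) :
    Dq (x + k) = fq^[k] (Dq x) := by
  induction k with
  | zero => simp
  | succ n ih =>
      have hz : x + (n : ℚ) ≠ 0 := by
        have : (0 : ℚ) ≤ n := Nat.cast_nonneg n
        positivity
      have he : x + ((n + 1 : ℕ) : ℚ) = (x + n) + 1 := by push_cast; ring
      rw [he, Dq_add_one hz, ih]
      exact (Function.iterate_succ_apply' fq n (Dq x)).symm

lemma dual10_two_cons (m : ℕ → ℤ) (q : ℕ) (h3 : 3 ≤ m 1) (hq : 1 ≤ q) :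
    dual10 m 2 q = 2 :: dual10 m 3 q := by
  have hk : (m 1 - 2).toNat = (m 1 - 3).toNat + 1 := by omega
  match q, hq with
  | 1, _ => simp [dual10, hk, List.replicate_succ]
  | (n + 2), _ => simp [dual10, hk, List.replicate_succ]

lemma main10 (q : ℕ) : ∀ (m : ℕ → ℤ),
    (∀ j, 1 ≤ j → j ≤ 2 * (q + 1) → Odd j → 3 ≤ m j) →
    (∀ j, 1 ≤ j → j ≤ 2 * (q + 1) → Even j → 0 ≤ m j) →
    2 < ncf (primal10 m (q + 1)) ∧
      ncf (dual10 m 2 (q + 1)) = Dq (ncf (primal10 m (q + 1))) := by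
  induction q with
  | zero =>
      intro m hodd heven
      have h1 : 3 ≤ m 1 := hodd 1 le_rfl (by norm_num) odd_one
      have h2 : 0 ≤ m 2 := heven 2 (by norm_num) (by norm_num) (by decide)
      have hk2 : ((m 2).toNat : ℤ) = m 2 := Int.toNat_of_nonneg h2
      have hk' : (((m 1 - 2).toNat : ℤ)) = m 1 - 2 := Int.toNat_of_nonneg (by omega)
      set k := (m 2).toNat with hk
      set k' := (m 1 - 2).toNat with hk'def
      set τ : ℚ := fq^[k] 2 with hτ
      have hτ1 : 1 < τ := iter_fq_gt_one one_lt_two k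
      have hfu : fq (fq^[k] (0 : ℚ)) = τ := by
        calc fq (fq^[k] (0 : ℚ)) = fq^[k + 1] (0 : ℚ) :=
              (Function.iterate_succ_apply' fq k 0).symm
          _ = fq^[k] (fq 0) := Function.iterate_succ_apply fq k 0
          _ = τ := by norm_num [fq]; exact hτ.symm
      have hu : (fq^[k] (0 : ℚ))⁻¹ = 2 - τ := by
        rw [← hfu]; unfold fq; ring
      have hρ : ncf (primal10 m 1) = τ + ((m 1 : ℚ) - 2) := by
        show ncf ((m 1 :: List.replicate (m 2).toNat 2) ++ primal10 _ 0) = _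
        rw [List.cons_append, ncf_cons, ncf_rep]
        show (m 1 : ℚ) - (fq^[k] (ncf []))⁻¹ = _
        rw [ncf_nil, hu]; ring
      have hm1 : (3 : ℚ) ≤ (m 1 : ℚ) := by exact_mod_cast h1
      constructor
      · rw [hρ]; linarith
      · have hdual : ncf (dual10 m 2 1) = fq^[k'] ((m 2 : ℚ) + 2) := by
          show ncf (List.replicate (m 1 - 2).toNat 2 ++ [m 2 + 2]) = _
          rw [ncf_rep, ncf_cons, ncf_nil]
          norm_num
          rfl
        rw [hρ, hdual]
        have hc : ((m 1 : ℚ) - 2) = (k' : ℚ) := by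
          exact_mod_cast congrArg (Int.cast : ℤ → ℚ) hk'.symm
        rw [hc, Dq_add_nat hτ1, hτ, Dq_iter one_lt_two]
        congr 1
        have : ((k : ℤ) : ℚ) = (m 2 : ℚ) := by exact_mod_cast hk2
        have hDq2 : Dq 2 = 2 := by norm_num [Dq]
        rw [hDq2]
        push_cast at this ⊢
        linarith
  | succ n ih =>
      intro m hodd heven
      have h1 : 3 ≤ m 1 := hodd 1 le_rfl (by omega) odd_one
      have h2 : 0 ≤ m 2 := heven 2 (by norm_num) (by omega) (by decide)
      have h3 : 3 ≤ m 3 := hodd 3 (by norm_num) (by omega) (by decide)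
      have hodd' : ∀ j, 1 ≤ j → j ≤ 2 * (n + 1) → Odd j → 3 ≤ m (j + 2) := by
        intro j hj1 hj2 hj3
        exact hodd (j + 2) (by omega) (by omega) (by obtain ⟨t, ht⟩ := hj3; exact ⟨t + 1, by omega⟩)
      have heven' : ∀ j, 1 ≤ j → j ≤ 2 * (n + 1) → Even j → 0 ≤ m (j + 2) := by
        intro j hj1 hj2 hj3
        exact heven (j + 2) (by omega) (by omega) (by obtain ⟨t, ht⟩ := hj3; exact ⟨t + 1, by omega⟩)
      obtain ⟨hσ2, hσd⟩ := ih (fun j => m (j + 2)) hodd' heven'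
      set σ : ℚ := ncf (primal10 (fun j => m (j + 2)) (n + 1)) with hσ
      have hσ1 : 1 < σ := lt_trans one_lt_two hσ2
      have hk2 : ((m 2).toNat : ℤ) = m 2 := Int.toNat_of_nonneg h2
      have hk' : (((m 1 - 2).toNat : ℤ)) = m 1 - 2 := Int.toNat_of_nonneg (by omega)
      set k := (m 2).toNat with hk
      set k' := (m 1 - 2).toNat with hk'def
      set τ : ℚ := fq^[k + 1] σ with hτ
      have hτ1 : 1 < τ := iter_fq_gt_one hσ1 (k + 1)
      have hfu : fq (fq^[k] σ) = τ :=
        (Function.iterate_succ_apply' fq k σ).symm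
      have hu : (fq^[k] σ)⁻¹ = 2 - τ := by
        rw [← hfu]; unfold fq; ring
      have hρ : ncf (primal10 m (n + 2)) = τ + ((m 1 : ℚ) - 2) := by
        show ncf ((m 1 :: List.replicate (m 2).toNat 2) ++ primal10 _ (n + 1)) = _
        rw [List.cons_append, ncf_cons, ncf_rep, ← hσ, hu]; ring
      have hm1 : (3 : ℚ) ≤ (m 1 : ℚ) := by exact_mod_cast h1
      constructor
      · rw [hρ]; linarith
      · -- dual side
        have hcons : dual10 (fun j => m (j + 2)) 2 (n + 1) =
            2 :: dual10 (fun j => m (j + 2)) 3 (n + 1) :=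
          dual10_two_cons _ _ h3 (by omega)
        set y : ℚ := ncf (dual10 (fun j => m (j + 2)) 3 (n + 1)) with hy
        have hyinv : y⁻¹ = 2 - Dq σ := by
          have := hσd
          rw [hcons, ncf_cons, ← hy] at this
          push_cast at this
          linarith
        have hdual : ncf (dual10 m 2 (n + 2)) = fq^[k'] ((m 2 : ℚ) + 3 - y⁻¹) := by
          show ncf (List.replicate (m 1 - 2).toNat 2 ++
            ((m 2 + 3) :: dual10 (fun j => m (j + 2)) 3 (n + 1))) = _
          rw [ncf_rep, ncf_cons, ← hy, ← hk'def]
          congr 1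
          push_cast
          ring
        rw [hρ, hdual, hyinv]
        have hc : ((m 1 : ℚ) - 2) = (k' : ℚ) := by
          exact_mod_cast congrArg (Int.cast : ℤ → ℚ) hk'.symm
        rw [hc, Dq_add_nat hτ1, hτ, Dq_iter hσ1]
        congr 1
        have : ((k : ℤ) : ℚ) = (m 2 : ℚ) := by exact_mod_cast hk2
        push_cast at this ⊢
        linarith

/-- If `δ₂ = [m₁, 2,…,2 (m₂ twos), m₃, …, m_{2q-1}, 2,…,2 (m_{2q} twos)] > 2` with
    `m₁, m₃, …, m_{2q-1} ≥ 3` and `m₂, m₄, …, m_{2q} ≥ 0`, then `δ₂' = δ₂/(δ₂-1)`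
    has expansion `[2,…,2 (m₁-2 twos), m₂+3, 2,…,2 (m₃-3 twos), m₄+3, …,
    2,…,2 (m_{2q-1}-3 twos), m_{2q}+2]`. -/
theorem stmt_10 (m : ℕ → ℤ) (q : ℕ) (hq : 1 ≤ q)
    (hodd : ∀ j, 1 ≤ j → j ≤ 2 * q → Odd j → 3 ≤ m j)
    (heven : ∀ j, 1 ≤ j → j ≤ 2 * q → Even j → 0 ≤ m j)
    (hδ : 2 < ncf (primal10 m q)) :
    ncf (dual10 m 2 q) = ncf (primal10 m q) / (ncf (primal10 m q) - 1) := by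
  obtain ⟨n, rfl⟩ : ∃ n, q = n + 1 := ⟨q - 1, by omega⟩
  exact (main10 n m hodd heven).2
end

section
/- With the recursions x_{i+1}, p_{i+1}, q_{i+1}, g_{i+1} as in the blow-down process (initialized so that 2g₀ - 2 - x₀ + p₀ + q₀ = d - 1), if additionally 2g_i - 2 - x_i ≥ 0 for all i in a range 0 ≤ i ≤ N, then d > p_i + q_i for all 0 ≤ i ≤ N. -/
/-!
Each step of the recursion, with multiplier `k` and `c = q i` or `c = p i`, adds `k c²` to `x`,
`k c` to `p + q` and `k c (c - 1)` to `2g`, so `2g - 2 - x + p + q` is invariant and stays `d - 1`.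
Hence `p + q = d - 1 - (2g - 2 - x) < d` whenever the adjunction term `2g - 2 - x` is nonnegative.
-/

lemma adjunction_add_degree_step (x g s k c : ℤ) :
    2 * (g + k * (c * (c - 1) / 2)) - 2 - (x + k * c ^ 2) + (s + k * c) =
      2 * g - 2 - x + s := by
  have hc : 2 * (c * (c - 1) / 2) = c * (c - 1) :=
    Int.two_mul_ediv_two_of_even (Int.even_mul_pred_self c)
  linear_combination k * hc

theorem stmt_14_general (x p q g n m : ℕ → ℤ) (d : ℤ) (N : ℕ)
    (h0 : 2 * g 0 - 2 - x 0 + p 0 + q 0 = d - 1)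
    (heven : ∀ i, Even i →
      x (i + 1) = x i + (n (i + 1) + 1) * (q i) ^ 2 ∧
      p (i + 1) = p i + (n (i + 1) + 1) * q i ∧
      q (i + 1) = q i ∧
      g (i + 1) = g i + (n (i + 1) + 1) * (q i * (q i - 1) / 2))
    (hodd : ∀ i, Odd i →
      x (i + 1) = x i + (m (i + 1) + 1) * (p i) ^ 2 ∧
      q (i + 1) = q i + (m (i + 1) + 1) * p i ∧
      p (i + 1) = p i ∧
      g (i + 1) = g i + (m (i + 1) + 1) * (p i * (p i - 1) / 2))
    (hadj : ∀ i, i ≤ N → 0 ≤ 2 * g i - 2 - x i) :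
    ∀ i, i ≤ N → p i + q i < d := by
  have invariant : ∀ i, 2 * g i - 2 - x i + p i + q i = d - 1 := by
    intro i
    induction i with
    | zero => exact h0
    | succ i ih =>
      rcases Nat.even_or_odd i with hi | hi
      · obtain ⟨hx, hp, hq, hg⟩ := heven i hi
        rw [hx, hp, hq, hg]
        linear_combination
          ih + adjunction_add_degree_step (x i) (g i) (p i + q i) (n (i + 1) + 1) (q i)
      · obtain ⟨hx, hq, hp, hg⟩ := hodd i hi
        rw [hx, hp, hq, hg]
        linear_combination
          ih + adjunction_add_degree_step (x i) (g i) (p i + q i) (m (i + 1) + 1) (p i)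
  intro i hi
  linarith [hadj i hi, invariant i]

/-- With the blow-down recursions (initialized so that
    `2g₀ - 2 - x₀ + p₀ + q₀ = d - 1`), if `2gᵢ - 2 - xᵢ ≥ 0` for all `0 ≤ i ≤ N`,
    then `d > pᵢ + qᵢ` for all `0 ≤ i ≤ N`. -/
theorem stmt_14 (x p q g n m : ℕ → ℤ) (d : ℤ) (N : ℕ)
    (hn : ∀ j, 0 ≤ n j) (hm : ∀ j, 0 ≤ m j)
    (h0 : 2 * g 0 - 2 - x 0 + p 0 + q 0 = d - 1)
    (heven : ∀ i, Even i →
      x (i + 1) = x i + (n (i + 1) + 1) * (q i) ^ 2 ∧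
      p (i + 1) = p i + (n (i + 1) + 1) * q i ∧
      q (i + 1) = q i ∧
      g (i + 1) = g i + (n (i + 1) + 1) * (q i * (q i - 1) / 2))
    (hodd : ∀ i, Odd i →
      x (i + 1) = x i + (m (i + 1) + 1) * (p i) ^ 2 ∧
      q (i + 1) = q i + (m (i + 1) + 1) * p i ∧
      p (i + 1) = p i ∧
      g (i + 1) = g i + (m (i + 1) + 1) * (p i * (p i - 1) / 2))
    (hadj : ∀ i, i ≤ N → 0 ≤ 2 * g i - 2 - x i) :
    ∀ i, i ≤ N → p i + q i < d :=
  stmt_14_general x p q g n m d N h0 heven hodd hadj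
end
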